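/- Any finite set of n points in the unit square [0,1]² admits a spanning tree (in the complete graph on the points with Euclidean edge weights) of total length at most C·√n for an absolute constant C (one may take C = 4). -/

import Mathlib

open scoped Classical

/-!
Cut the square into `m = ⌈√n⌉` vertical strips of width `1/m` and walk through the points along a
snake: up the first strip, down the second, and so on. Ordering the points by a key that increases
along the snake, each step between consecutive points costs at most `1/m` plus the increase of the
key, and the key ranges over an interval of length about `5m/2`. The resulting path is a spanning
tree of length at most `(n - 1)/m + 5m/2 + O(1) ≤ 4√n`.
-/

open Finset Set

namespace SimpleGraph

def pathEdge (k : ℕ) : Fin k ↪ Sym2 (Fin (k + 1)) where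
  toFun i := s(i.castSucc, i.succ)
  inj' i j h := by
    simp only [Sym2.eq_iff, Fin.ext_iff, Fin.val_castSucc, Fin.val_succ] at h
    omega

@[simp]
theorem pathEdge_apply (k : ℕ) (i : Fin k) : pathEdge k i = s(i.castSucc, i.succ) := rfl

theorem pathGraph_edgeFinset (k : ℕ) [Fintype (pathGraph (k + 1)).edgeSet] :
    (pathGraph (k + 1)).edgeFinset = univ.map (pathEdge k) := by
  ext e
  induction e using Sym2.ind with
  | _ u v =>
    rw [mem_edgeFinset, mem_edgeSet, pathGraph_adj, mem_map]
    simp only [Finset.mem_univ, true_and, pathEdge_apply, Sym2.eq_iff, Fin.ext_iff,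
      Fin.val_castSucc, Fin.val_succ]
    constructor
    · rintro (h | h)
      · exact ⟨⟨u, by omega⟩, Or.inl ⟨rfl, h⟩⟩
      · exact ⟨⟨v, by omega⟩, Or.inr ⟨rfl, h⟩⟩
    · rintro ⟨i, h | h⟩ <;> omega

theorem pathGraph_isTree (k : ℕ) : (pathGraph (k + 1)).IsTree :=
  isTree_iff_connected_and_card.mpr ⟨pathGraph_connected k, by
    rw [Nat.card_eq_fintype_card, ← edgeFinset_card, pathGraph_edgeFinset]; simp⟩

end SimpleGraph

theorem Fin.sum_univ_succ_sub_castSucc {G : Type*} [AddCommGroup G] {k : ℕ} (f : Fin (k + 1) → G) :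
    ∑ i : Fin k, (f i.succ - f i.castSucc) = f (Fin.last k) - f 0 := by
  induction k with
  | zero => simp
  | succ k ih =>
    rw [Fin.sum_univ_castSucc]
    simp only [Fin.succ_castSucc]
    rw [ih (fun i => f i.castSucc), Fin.succ_last, Fin.castSucc_zero]
    abel

theorem Fintype.exists_equivFin_monotone_comp {V α : Type*} [Fintype V] [LinearOrder α]
    (f : V → α) : ∃ e : Fin (Fintype.card V) ≃ V, Monotone (f ∘ e) :=
  let e₀ := (Fintype.equivFin V).symm
  ⟨(Tuple.sort (f ∘ e₀)).trans e₀, Tuple.monotone_sort (f ∘ e₀)⟩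

section PathTree

open SimpleGraph

variable {V : Type*} [PseudoMetricSpace V]

theorem sum_dist_edgeFinset_map_pathGraph {k : ℕ} (e : Fin (k + 1) ≃ V)
    [Fintype ((pathGraph (k + 1)).map e.toEmbedding).edgeSet] :
    ∑ x ∈ ((pathGraph (k + 1)).map e.toEmbedding).edgeFinset, Sym2.lift ⟨dist, dist_comm⟩ x =
      ∑ i : Fin k, dist (e i.castSucc) (e i.succ) := by
  have : ((pathGraph (k + 1)).map e.toEmbedding).edgeFinset =
      (pathGraph (k + 1)).edgeFinset.map e.toEmbedding.sym2Map := by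
    rw [← coe_inj, coe_edgeFinset, edgeSet_map, coe_map, coe_edgeFinset]
  rw [this, pathGraph_edgeFinset, Finset.map_map, sum_map]
  rfl

theorem exists_isTree_sum_dist_le [Fintype V] [Nonempty V] (key : V → ℝ) {a b c : ℝ}
    (hkey : ∀ v, key v ∈ Icc a b)
    (hdist : ∀ u v, key u ≤ key v → dist u v ≤ c + (key v - key u)) :
    ∃ T : SimpleGraph V, T.IsTree ∧
      ∑ x ∈ T.edgeFinset, Sym2.lift ⟨dist, dist_comm⟩ x ≤ (Fintype.card V - 1) * c + (b - a) := by
  obtain ⟨k, hk⟩ : ∃ k, Fintype.card V = k + 1 :=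
    Nat.exists_eq_add_one_of_ne_zero Fintype.card_ne_zero
  obtain ⟨e, he⟩ := Fintype.exists_equivFin_monotone_comp key
  let e' : Fin (k + 1) ≃ V := (finCongr hk.symm).trans e
  have he' : Monotone (key ∘ e') := he.comp (Fin.castOrderIso hk.symm).monotone
  refine ⟨(pathGraph (k + 1)).map e'.toEmbedding,
    (Iso.map e' _).isTree_iff.mp (pathGraph_isTree k), ?_⟩
  rw [sum_dist_edgeFinset_map_pathGraph, hk]
  calc ∑ i : Fin k, dist (e' i.castSucc) (e' i.succ)
      ≤ ∑ i : Fin k, (c + (key (e' i.succ) - key (e' i.castSucc))) :=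
        sum_le_sum fun i _ => hdist _ _ (he' (Fin.castSucc_le_succ i))
    _ = k * c + (key (e' (Fin.last k)) - key (e' 0)) := by
        rw [sum_add_distrib, Fin.sum_univ_succ_sub_castSucc (fun i => key (e' i)), sum_const,
          card_univ, Fintype.card_fin, nsmul_eq_mul]
    _ ≤ ((k + 1 : ℕ) - 1) * c + (b - a) := by
        push_cast
        linarith [(hkey (e' (Fin.last k))).2, (hkey (e' 0)).1]

end PathTree

local notation "ℝ²" => EuclideanSpace ℝ (Fin 2)

/-- The `min` puts `x = 1` into the last strip rather than into a strip of its own. -/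
noncomputable def stripIndex (m : ℕ) (x : ℝ) : ℕ := min ⌊x * m⌋₊ (m - 1)

theorem stripIndex_le_mul {m : ℕ} {x : ℝ} (hx : 0 ≤ x) : (stripIndex m x : ℝ) ≤ x * m :=
  (Nat.cast_le.mpr (min_le_left _ _)).trans (Nat.floor_le (by positivity))

theorem mul_le_stripIndex_add_one {m : ℕ} (hm : 1 ≤ m) {x : ℝ} (hx : x ≤ 1) :
    x * m ≤ stripIndex m x + 1 := by
  rcases le_total ⌊x * m⌋₊ (m - 1) with h | h
  · rw [stripIndex, min_eq_left h]
    exact (Nat.lt_floor_add_one _).le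
  · rw [stripIndex, min_eq_right h, Nat.cast_sub hm, Nat.cast_one, sub_add_cancel]
    exact mul_le_of_le_one_left (by positivity) hx

theorem abs_sub_le_of_stripIndex_eq {m : ℕ} (hm : 1 ≤ m) {x y : ℝ} (hx : x ∈ Icc (0 : ℝ) 1)
    (hy : y ∈ Icc (0 : ℝ) 1) (h : stripIndex m x = stripIndex m y) : |x - y| ≤ 1 / m := by
  have hm' : (0 : ℝ) < m := by exact_mod_cast hm
  rw [le_div_iff₀ hm', ← Nat.abs_cast, ← abs_mul, abs_le, sub_mul]
  have := stripIndex_le_mul (m := m) hx.1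
  have := stripIndex_le_mul (m := m) hy.1
  have := mul_le_stripIndex_add_one hm hx.2
  have := mul_le_stripIndex_add_one hm hy.2
  rw [h] at *
  constructor <;> linarith

noncomputable def snakeHeight (m : ℕ) (p : ℝ²) : ℝ :=
  if Even (stripIndex m (p 0)) then p 1 else 1 - p 1

/-- Consecutive strips are `5/2` apart, so that the key increases by at least `3/2 ≥ √2` when the
snake changes strip. -/
noncomputable def snakeKey (m : ℕ) (p : ℝ²) : ℝ :=
  5 / 2 * stripIndex m (p 0) + snakeHeight m p

theorem snakeHeight_mem_Icc (m : ℕ) {p : ℝ²} (hp : p 1 ∈ Icc (0 : ℝ) 1) :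
    snakeHeight m p ∈ Icc (0 : ℝ) 1 := by
  unfold snakeHeight
  split_ifs <;> constructor <;> linarith [hp.1, hp.2]

theorem snakeKey_mem_Icc {m : ℕ} (hm : 1 ≤ m) {p : ℝ²} (hp : ∀ i, p i ∈ Icc (0 : ℝ) 1) :
    snakeKey m p ∈ Icc (0 : ℝ) (5 / 2 * (m - 1) + 1) := by
  have hs : (stripIndex m (p 0) : ℝ) ≤ m - 1 :=
    calc (stripIndex m (p 0) : ℝ) ≤ ((m - 1 : ℕ) : ℝ) := by exact_mod_cast min_le_right _ _
      _ = m - 1 := by rw [Nat.cast_sub hm, Nat.cast_one]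
  have := snakeHeight_mem_Icc m (hp 1)
  constructor <;> unfold snakeKey <;> nlinarith [this.1, this.2]

theorem dist_le_abs_add_abs (p q : ℝ²) : dist p q ≤ |p 0 - q 0| + |p 1 - q 1| := by
  rw [EuclideanSpace.dist_eq, Fin.sum_univ_two, Real.dist_eq, Real.dist_eq]
  refine Real.sqrt_le_iff.mpr ⟨by positivity, ?_⟩
  nlinarith [abs_nonneg (p 0 - q 0), abs_nonneg (p 1 - q 1), sq_abs (p 0 - q 0), sq_abs (p 1 - q 1)]

theorem dist_le_of_mem_unitSquare {p q : ℝ²} (hp : ∀ i, p i ∈ Icc (0 : ℝ) 1)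
    (hq : ∀ i, q i ∈ Icc (0 : ℝ) 1) : dist p q ≤ 3 / 2 := by
  rw [EuclideanSpace.dist_eq, Fin.sum_univ_two, Real.dist_eq, Real.dist_eq]
  have h0 := abs_sub_le_of_nonneg_of_le (hp 0).1 (hp 0).2 (hq 0).1 (hq 0).2
  have h1 := abs_sub_le_of_nonneg_of_le (hp 1).1 (hp 1).2 (hq 1).1 (hq 1).2
  refine Real.sqrt_le_iff.mpr ⟨by norm_num, ?_⟩
  nlinarith [abs_nonneg (p 0 - q 0), abs_nonneg (p 1 - q 1)]

theorem dist_le_one_div_add_snakeKey_sub {m : ℕ} (hm : 1 ≤ m) {p q : ℝ²}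
    (hp : ∀ i, p i ∈ Icc (0 : ℝ) 1) (hq : ∀ i, q i ∈ Icc (0 : ℝ) 1)
    (hpq : snakeKey m p ≤ snakeKey m q) :
    dist p q ≤ 1 / m + (snakeKey m q - snakeKey m p) := by
  have hhp := snakeHeight_mem_Icc m (hp 1)
  have hhq := snakeHeight_mem_Icc m (hq 1)
  unfold snakeKey at *
  rcases eq_or_ne (stripIndex m (p 0)) (stripIndex m (q 0)) with h | h
  · have hy : |p 1 - q 1| ≤ snakeHeight m q - snakeHeight m p := by
      unfold snakeHeight at *
      rw [h] at hpq ⊢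
      split_ifs at hpq ⊢ <;> rw [abs_le] <;> constructor <;> linarith
    calc dist p q ≤ |p 0 - q 0| + |p 1 - q 1| := dist_le_abs_add_abs p q
      _ ≤ _ := by rw [h]; linarith [abs_sub_le_of_stripIndex_eq hm (hp 0) (hq 0) h]
  · have hlt : stripIndex m (p 0) + 1 ≤ stripIndex m (q 0) := by
      by_contra! hgt
      have : (stripIndex m (q 0) : ℝ) + 1 ≤ stripIndex m (p 0) := by
        exact_mod_cast Nat.lt_of_le_of_ne (Nat.lt_succ_iff.mp hgt) (Ne.symm h)
      linarith [hhp.1, hhq.2]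
    have : (stripIndex m (p 0) : ℝ) + 1 ≤ stripIndex m (q 0) := by exact_mod_cast hlt
    have : (0 : ℝ) ≤ 1 / m := by positivity
    linarith [dist_le_of_mem_unitSquare hp hq, hhp.2, hhq.1]

theorem sq_sub_one_div_add_le {r m : ℝ} (hr : 1 ≤ r) (hrm : r ≤ m) (hmr : m < r + 1) :
    (r ^ 2 - 1) / m + (5 / 2 * (m - 1) + 1) ≤ 4 * r := by
  have hr0 : 0 < r := by linarith
  have h : (r ^ 2 - 1) / m ≤ (r ^ 2 - 1) / r :=
    div_le_div_of_nonneg_left (by nlinarith) hr0 hrm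
  have h' : (r ^ 2 - 1) / r = r - 1 / r := by field_simp
  have hamgm : 1 ≤ r / 2 + 1 / r := by
    rw [← sub_nonneg]
    have : r / 2 + 1 / r - 1 = ((r - 1) ^ 2 + 1) / (2 * r) := by field_simp; ring
    rw [this]
    positivity
  linarith

theorem spanning_tree_unit_square (S : Finset (EuclideanSpace ℝ (Fin 2)))
    (hS : ∀ p ∈ S, ∀ i, 0 ≤ p i ∧ p i ≤ 1) (hne : S.Nonempty) :
    ∃ T : SimpleGraph S, T.Connected ∧ T.IsAcyclic ∧
      ∑ e ∈ Finset.univ.filter (fun e : Sym2 S => e ∈ T.edgeSet),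
        Sym2.lift ⟨fun (u v : S) => dist (u : EuclideanSpace ℝ (Fin 2)) (v : EuclideanSpace ℝ (Fin 2)),
          fun _ _ => dist_comm _ _⟩ e
        ≤ 4 * Real.sqrt (S.card) := by
  have : Nonempty S := hne.coe_sort
  set n := S.card
  set m := ⌈√(n : ℝ)⌉₊
  have hn : 1 ≤ (n : ℝ) := by exact_mod_cast hne.card_pos
  have hr : 1 ≤ √(n : ℝ) := Real.one_le_sqrt.mpr hn
  have hm : 1 ≤ m := Nat.one_le_cast.mp (hr.trans (Nat.le_ceil _))
  obtain ⟨T, hT, hlen⟩ := exists_isTree_sum_dist_le (fun p : S => snakeKey m p)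
    (fun p => snakeKey_mem_Icc hm (hS p p.2))
    (fun p q => dist_le_one_div_add_snakeKey_sub hm (hS p p.2) (hS q q.2))
  refine ⟨T, hT.connected, hT.isAcyclic, ?_⟩
  have hbound := sq_sub_one_div_add_le hr (Nat.le_ceil _) (Nat.ceil_lt_add_one (by positivity))
  rw [Real.sq_sqrt (by positivity)] at hbound
  rw [Fintype.card_coe, sub_zero, mul_one_div] at hlen
  rw [filter_mem_univ_eq_toFinset]
  exact hlen.trans hbound
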